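/- arXiv:2304.09784 — 4 statements merged into one kernel-verified Lean document; each statement's English description precedes it below -/
import Mathlib

section
/- Let I_A, O_A, O_B be finite nonempty types and let V : I_A → Bool → O_A → O_B → Prop be a decidable valuation. Define ω(G) as the supremum over all probability distributions μ on pairs (A : I_A → O_A, B : Bool → O_B) of E_{(A,B)∼μ} E_{x uniform} E_{y uniform in Bool}[indicator of V x y (A x) (B y)], and define ω(G_coup) as the supremum over all probability distributions μ on pairs (A : I_A → O_A, B : Bool → O_B) of E_{(A,B)∼μ} E_{x uniform}[indicator of (V x false (A x) (B false) ∧ V x true (A x) (B true))]. Then 2·ω(G) − 1 ≤ ω(G_coup). -/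
/-! For a fixed question `x`, Bob's two answers win both rounds unless one of them loses, so
`1[V₀] + 1[V₁] - 1 ≤ 1[V₀ ∧ V₁]`. Averaging over `x` gives `2·ω(s) - 1 ≤ ω_coup(s)` for every
deterministic strategy `s`, and averaging over the shared randomness carries this to every mixed
strategy, hence to the suprema. -/

open Finset

lemma ite_add_ite_sub_one_le_ite_and (p q : Prop) [Decidable p] [Decidable q] :
    ((if p then 1 else 0) + (if q then 1 else 0) - 1 : ℝ) ≤ if p ∧ q then 1 else 0 := by
  split_ifs <;> simp_all

lemma two_mul_inv_card_mul_sum_sub_one_le {ι : Type*} [Fintype ι] {a b : ι → ℝ}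
    (h : ∀ i, 2 * a i - 1 ≤ b i) :
    2 * ((Fintype.card ι : ℝ)⁻¹ * ∑ i, a i) - 1 ≤ (Fintype.card ι : ℝ)⁻¹ * ∑ i, b i := by
  set c : ℝ := (Fintype.card ι : ℝ)
  have hc : c⁻¹ * c ≤ 1 := by
    rcases eq_or_ne c 0 with h0 | h0
    · simp [h0]
    · rw [inv_mul_cancel₀ h0]
  calc 2 * (c⁻¹ * ∑ i, a i) - 1 ≤ 2 * (c⁻¹ * ∑ i, a i) - c⁻¹ * c := by linarith
    _ = c⁻¹ * ∑ i, (2 * a i - 1) := by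
      simp only [sum_sub_distrib, ← mul_sum, sum_const, card_univ, nsmul_eq_mul, mul_one, c]
      ring
    _ ≤ c⁻¹ * ∑ i, b i := by gcongr with i; exact h i

namespace PMF

variable {α : Type*} [Fintype α]

lemma sum_toReal_eq_one (μ : PMF α) : ∑ a, (μ a).toReal = 1 := by
  rw [← ENNReal.toReal_sum fun a _ ↦ μ.apply_ne_top a, ← tsum_fintype (L := .unconditional _),
    μ.tsum_coe, ENNReal.toReal_one]

lemma sum_toReal_mul_le_of_le (μ : PMF α) {f : α → ℝ} {C : ℝ} (h : ∀ a, f a ≤ C) :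
    ∑ a, (μ a).toReal * f a ≤ C :=
  calc ∑ a, (μ a).toReal * f a ≤ ∑ a, (μ a).toReal * C := by gcongr with a; exact h a
    _ = C := by rw [← sum_mul, μ.sum_toReal_eq_one, one_mul]

lemma sum_toReal_mul_two_mul_sub_one (μ : PMF α) (f : α → ℝ) :
    ∑ a, (μ a).toReal * (2 * f a - 1) = 2 * ∑ a, (μ a).toReal * f a - 1 := by
  simp only [mul_sub, mul_one, sum_sub_distrib, μ.sum_toReal_eq_one, mul_left_comm _ (2 : ℝ),
    ← mul_sum]

theorem two_mul_sSup_sub_one_le_sSup {f g : α → ℝ} (hfg : ∀ a, 2 * f a - 1 ≤ g a)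
    (hg : ∀ a, 0 ≤ g a) :
    2 * sSup {p : ℝ | ∃ μ : PMF α, p = ∑ a, (μ a).toReal * f a} - 1
      ≤ sSup {q : ℝ | ∃ μ : PMF α, q = ∑ a, (μ a).toReal * g a} := by
  set G := {q : ℝ | ∃ μ : PMF α, q = ∑ a, (μ a).toReal * g a}
  obtain ⟨C, hC⟩ := (Set.finite_range g).bddAbove
  have hG : BddAbove G := ⟨C, by
    rintro _ ⟨μ, rfl⟩
    exact μ.sum_toReal_mul_le_of_le fun a ↦ hC (Set.mem_range_self a)⟩
  have hG₀ : 0 ≤ sSup G := Real.sSup_nonneg <| by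
    rintro _ ⟨μ, rfl⟩
    exact sum_nonneg fun a _ ↦ mul_nonneg ENNReal.toReal_nonneg (hg a)
  suffices sSup {p : ℝ | ∃ μ : PMF α, p = ∑ a, (μ a).toReal * f a} ≤ (sSup G + 1) / 2 by
    linarith
  refine Real.sSup_le ?_ (by positivity)
  rintro _ ⟨μ, rfl⟩
  have := calc 2 * ∑ a, (μ a).toReal * f a - 1
        = ∑ a, (μ a).toReal * (2 * f a - 1) := (μ.sum_toReal_mul_two_mul_sub_one f).symm
      _ ≤ ∑ a, (μ a).toReal * g a := by gcongr with a; exact hfg a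
      _ ≤ sSup G := le_csSup hG ⟨μ, rfl⟩
  linarith

end PMF

theorem coupled_game_bound_general
    {I_A O_A O_B : Type*}
    [Fintype I_A] [DecidableEq I_A]
    [Fintype O_A] [Fintype O_B]
    (V : I_A → Bool → O_A → O_B → Prop) [∀ x y oa ob, Decidable (V x y oa ob)] :
    2 * sSup {p : ℝ | ∃ μ : PMF ((I_A → O_A) × (Bool → O_B)),
        p = ∑ s : (I_A → O_A) × (Bool → O_B), (μ s).toReal *
          ((Fintype.card I_A : ℝ)⁻¹ * ∑ x : I_A,
            (2 : ℝ)⁻¹ * ∑ y : Bool, (if V x y (s.1 x) (s.2 y) then (1 : ℝ) else 0))}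
      - 1
    ≤ sSup {q : ℝ | ∃ μ : PMF ((I_A → O_A) × (Bool → O_B)),
        q = ∑ s : (I_A → O_A) × (Bool → O_B), (μ s).toReal *
          ((Fintype.card I_A : ℝ)⁻¹ * ∑ x : I_A,
            (if V x false (s.1 x) (s.2 false) ∧ V x true (s.1 x) (s.2 true)
              then (1 : ℝ) else 0))} :=
  PMF.two_mul_sSup_sub_one_le_sSup
    (fun s ↦ two_mul_inv_card_mul_sum_sub_one_le fun x ↦ by
      rw [mul_inv_cancel_left₀ two_ne_zero, Fintype.sum_bool, add_comm]
      exact ite_add_ite_sub_one_le_ite_and _ _)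
    (fun s ↦ by positivity)

/-- Proposition 3.6 of the paper, classical coupled-game bound:
with `ω(G)` and `ω(G_coup)` the suprema over all shared-randomness classical
strategies of the winning probabilities of the game and its coupled version,
`2·ω(G) − 1 ≤ ω(G_coup)`. -/
theorem coupled_game_bound
    {I_A O_A O_B : Type*}
    [Fintype I_A] [Nonempty I_A] [DecidableEq I_A]
    [Fintype O_A] [Nonempty O_A] [Fintype O_B] [Nonempty O_B]
    (V : I_A → Bool → O_A → O_B → Prop) [∀ x y oa ob, Decidable (V x y oa ob)] :
    2 * sSup {p : ℝ | ∃ μ : PMF ((I_A → O_A) × (Bool → O_B)),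
        p = ∑ s : (I_A → O_A) × (Bool → O_B), (μ s).toReal *
          ((Fintype.card I_A : ℝ)⁻¹ * ∑ x : I_A,
            (2 : ℝ)⁻¹ * ∑ y : Bool, (if V x y (s.1 x) (s.2 y) then (1 : ℝ) else 0))}
      - 1
    ≤ sSup {q : ℝ | ∃ μ : PMF ((I_A → O_A) × (Bool → O_B)),
        q = ∑ s : (I_A → O_A) × (Bool → O_B), (μ s).toReal *
          ((Fintype.card I_A : ℝ)⁻¹ * ∑ x : I_A,
            (if V x false (s.1 x) (s.2 false) ∧ V x true (s.1 x) (s.2 true)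
              then (1 : ℝ) else 0))} :=
  coupled_game_bound_general V
end

section
/- Let F be a field, n a positive integer, s : Fin n → F, k ∈ F, and a ∈ F. Let v, z : Fin n → Bool and set x = v XOR z (componentwise), and let c₀, c₁ : Fin n → F. Define w₀ i = a·(if z i then s i else 0) + c₀ i and w₁ i = a·(if z i then 0 else s i) + c₁ i for each i. If ∑_i (if v i then s i else 0) = k, then ∑_i (if x i then w₁ i else w₀ i) = a·k + ∑_i (if x i then c₁ i else c₀ i). -/
-- Selecting by `v ⊕ z` undoes the mask: the `s`-part survives exactly when `v` holds.
theorem ite_xor_mask_eq {R : Type*} [NonUnitalNonAssocSemiring R] (a s c₀ c₁ : R) (v z : Bool) :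
    (if xor v z then a * (if z then 0 else s) + c₁ else a * (if z then s else 0) + c₀)
      = a * (if v then s else 0) + if xor v z then c₁ else c₀ := by
  cases v <;> cases z <;> simp

theorem subsetSum_completeness_general
    {F : Type*} [Field F] (n : ℕ)
    (s : Fin n → F) (k a : F) (v z x : Fin n → Bool)
    (hx : ∀ i, x i = xor (v i) (z i))
    (c₀ c₁ w₀ w₁ : Fin n → F)
    (hw₀ : ∀ i, w₀ i = a * (if z i then s i else 0) + c₀ i)
    (hw₁ : ∀ i, w₁ i = a * (if z i then 0 else s i) + c₁ i)
    (hk : ∑ i, (if v i then s i else 0) = k) :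
    ∑ i, (if x i then w₁ i else w₀ i)
      = a * k + ∑ i, (if x i then c₁ i else c₀ i) := by
  subst hk
  simp_rw [hx, hw₀, hw₁, ite_xor_mask_eq]
  rw [Finset.mul_sum, Finset.sum_add_distrib]

/-- perfect completeness identity of the Subset Sum ZKP.
If `v` is a solution (`∑_{i : v i} s i = k`), `z` is a mask, `x = v ⊕ z`, and
`w₀ = a·(s∗z) + c₀`, `w₁ = a·(s∗z̄) + c₁`, then
`∑ i, (w_{x i}) i = a·k + ∑ i, (c_{x i}) i`. -/
theorem subsetSum_completeness
    {F : Type*} [Field F] (n : ℕ) (hn : 0 < n)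
    (s : Fin n → F) (k a : F) (v z x : Fin n → Bool)
    (hx : ∀ i, x i = xor (v i) (z i))
    (c₀ c₁ w₀ w₁ : Fin n → F)
    (hw₀ : ∀ i, w₀ i = a * (if z i then s i else 0) + c₀ i)
    (hw₁ : ∀ i, w₁ i = a * (if z i then 0 else s i) + c₁ i)
    (hk : ∑ i, (if v i then s i else 0) = k) :
    ∑ i, (if x i then w₁ i else w₀ i)
      = a * k + ∑ i, (if x i then c₁ i else c₀ i) :=
  subsetSum_completeness_general n s k a v z x hx c₀ c₁ w₀ w₁ hw₀ hw₁ hk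
end

section
/- Let F be a field, n a positive integer, s : Fin n → F, k ∈ F, and a ∈ F. Assume there is no Boolean vector u : Fin n → Bool with ∑_i (if u i then s i else 0) = k. Let z, x : Fin n → Bool, c₀, c₁ : Fin n → F, c' ∈ F, and w₀, w₁ : Fin n → F satisfy: (i) w₀ i = a·(if z i then s i else 0) + c₀ i and w₁ i = a·(if z i then 0 else s i) + c₁ i for all i, and (ii) ∑_i (if x i then w₁ i else w₀ i) = a·k + c'. Let D = (∑_i (if x i ≠ z i then s i else 0)) − k. Then D ≠ 0 and a = (c' − ∑_i (if x i then c₁ i else c₀ i)) · D⁻¹. -/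
/-!
Unfolding the commitments, the answer to challenge `1` is `a * S + C`, where `S` sums the `s i`
over the positions where `x` and `z` differ and `C` collects the blinding values chosen by `x`.
Comparing with the verifier's check `a * k + c'` gives `a * (S - k) = c' - C`. Since `S` is the
subset sum of the Boolean vector `x ⊕ z`, the absence of solutions makes `S - k` nonzero, and
`a` can be solved for.
-/

open Finset

section SubsetSum

variable {ι R : Type*}

theorem ite_response_eq [CommSemiring R] (x z : Bool) (a s c₀ c₁ : R) :
    (if x then a * (if z then 0 else s) + c₁ else a * (if z then s else 0) + c₀)
      = a * (if x ≠ z then s else 0) + (if x then c₁ else c₀) := by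
  cases x <;> cases z <;> simp

theorem sum_ite_response_eq [CommSemiring R] [Fintype ι] (x z : ι → Bool) (a : R)
    (s c₀ c₁ w₀ w₁ : ι → R)
    (hw₀ : ∀ i, w₀ i = a * (if z i then s i else 0) + c₀ i)
    (hw₁ : ∀ i, w₁ i = a * (if z i then 0 else s i) + c₁ i) :
    ∑ i, (if x i then w₁ i else w₀ i)
      = a * ∑ i, (if x i ≠ z i then s i else 0) + ∑ i, (if x i then c₁ i else c₀ i) := by
  simp only [hw₀, hw₁, ite_response_eq, mul_sum, ← sum_add_distrib]

theorem sum_ite_ne_of_not_exists_solution [AddCommMonoid R] [Fintype ι] {s : ι → R} {k : R}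
    (hnosol : ¬ ∃ u : ι → Bool, ∑ i, (if u i then s i else 0) = k)
    (p : ι → Prop) [DecidablePred p] :
    ∑ i, (if p i then s i else 0) ≠ k :=
  fun h => hnosol ⟨fun i => decide (p i), by simpa only [decide_eq_true_eq] using h⟩

end SubsetSum

theorem subsetSum_soundness_recover_challenge_general
    {F : Type*} [Field F] (n : ℕ)
    (s : Fin n → F) (k a : F)
    (hnosol : ¬ ∃ u : Fin n → Bool, ∑ i, (if u i then s i else 0) = k)
    (z x : Fin n → Bool) (c₀ c₁ : Fin n → F) (c' : F) (w₀ w₁ : Fin n → F)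
    (hw₀ : ∀ i, w₀ i = a * (if z i then s i else 0) + c₀ i)
    (hw₁ : ∀ i, w₁ i = a * (if z i then 0 else s i) + c₁ i)
    (hsum : ∑ i, (if x i then w₁ i else w₀ i) = a * k + c')
    (D : F) (hD : D = (∑ i, (if x i ≠ z i then s i else 0)) - k) :
    D ≠ 0 ∧ a = (c' - ∑ i, (if x i then c₁ i else c₀ i)) * D⁻¹ := by
  have hD₀ : D ≠ 0 :=
    hD ▸ sub_ne_zero.mpr (sum_ite_ne_of_not_exists_solution hnosol fun i => x i ≠ z i)
  refine ⟨hD₀, ?_⟩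
  rw [← div_eq_mul_inv]
  refine eq_div_of_mul_eq hD₀ ?_
  rw [sum_ite_response_eq x z a s c₀ c₁ w₀ w₁ hw₀ hw₁] at hsum
  rw [hD]
  linear_combination hsum

/-- soundness identity of the Subset Sum ZKP.
If the instance `(s, k)` has no solution, then a second prover answering both
challenges can compute the challenge `a` from his own outputs. -/
theorem subsetSum_soundness_recover_challenge
    {F : Type*} [Field F] (n : ℕ) (hn : 0 < n)
    (s : Fin n → F) (k a : F)
    (hnosol : ¬ ∃ u : Fin n → Bool, ∑ i, (if u i then s i else 0) = k)
    (z x : Fin n → Bool) (c₀ c₁ : Fin n → F) (c' : F) (w₀ w₁ : Fin n → F)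
    (hw₀ : ∀ i, w₀ i = a * (if z i then s i else 0) + c₀ i)
    (hw₁ : ∀ i, w₁ i = a * (if z i then 0 else s i) + c₁ i)
    (hsum : ∑ i, (if x i then w₁ i else w₀ i) = a * k + c')
    (D : F) (hD : D = (∑ i, (if x i ≠ z i then s i else 0)) - k) :
    D ≠ 0 ∧ a = (c' - ∑ i, (if x i then c₁ i else c₀ i)) * D⁻¹ :=
  subsetSum_soundness_recover_challenge_general n s k a hnosol z x c₀ c₁ c' w₀ w₁ hw₀ hw₁ hsum D hD
end

section
/- Let F be a field, n, m positive integers, and let a 3-CNF formula be given by clauses : Fin m → Fin 3 → (Fin n × Bool), where (clauses i j).1 is the variable index at position j of clause i and (clauses i j).2 = true means that literal is negated. Let s' : Fin n → Bool be an assignment, and define the literal-value bits p : Fin m → Fin 3 → Bool by p i j = if (clauses i j).2 then ¬(s' (clauses i j).1) else s' (clauses i j).1. Let e : Fin m → Fin 3 satisfy p i (e i) = true for all i. Fix a ∈ F and keys c : Fin m → Fin 3 → F, c' : Fin n → F, and define commitments w i j = a·(if p i j then 1 else 0) + c i j and w' j = a·(if s' j then 1 else 0) + c' j. Then: (1) for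 every i, j with (clauses i j).2 = true, w i j + w' ((clauses i j).1) = a + (c i j + c' ((clauses i j).1)); (2) for every i, j with (clauses i j).2 = false, w i j − w' ((clauses i j).1) = c i j − c' ((clauses i j).1); and (3) for every i, w i (e i) = a + c i (e i). -/
/-! The bit of a negated literal and the bit of its variable add up to `1`, so by linearity of the
commitment `w = a·b + c` the sum of their commitments opens to `1` under the key `c + c'`. The bit of
a non-negated literal equals the bit of its variable, so the difference of their commitments opens
to `0` under the key `c - c'`. The selected literal of each clause is true, so it opens to `1`. -/

theorem Bool.ite_not_add_ite {R : Type*} [AddMonoidWithOne R] (b : Bool) :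
    ((if (!b) = true then 1 else 0 : R) + if b = true then 1 else 0) = 1 := by
  cases b <;> simp

theorem mul_ite_not_add_add_mul_ite_add {R : Type*} [NonAssocSemiring R] (a c d : R) (b : Bool) :
    a * (if (!b) = true then 1 else 0) + c + (a * (if b = true then 1 else 0) + d) = a + (c + d) := by
  rw [add_add_add_comm, ← mul_add, Bool.ite_not_add_ite, mul_one]

theorem threeSAT_completeness_general
    {F : Type*} [Field F] (n m : ℕ)
    (clauses : Fin m → Fin 3 → (Fin n × Bool))
    (s' : Fin n → Bool) (p : Fin m → Fin 3 → Bool)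
    (hp : ∀ i j, p i j = if (clauses i j).2 then !(s' (clauses i j).1) else s' (clauses i j).1)
    (e : Fin m → Fin 3) (he : ∀ i, p i (e i) = true)
    (a : F) (c : Fin m → Fin 3 → F) (c' : Fin n → F)
    (w : Fin m → Fin 3 → F) (w' : Fin n → F)
    (hw : ∀ i j, w i j = a * (if p i j then 1 else 0) + c i j)
    (hw' : ∀ j, w' j = a * (if s' j then 1 else 0) + c' j) :
    (∀ i j, (clauses i j).2 = true →
        w i j + w' (clauses i j).1 = a + (c i j + c' (clauses i j).1)) ∧
    (∀ i j, (clauses i j).2 = false →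
        w i j - w' (clauses i j).1 = c i j - c' (clauses i j).1) ∧
    (∀ i, w i (e i) = a + c i (e i)) := by
  refine ⟨fun i j hneg => ?_, fun i j hpos => ?_, fun i => ?_⟩
  · rw [hw, hw', hp, if_pos hneg]
    exact mul_ite_not_add_add_mul_ite_add ..
  · rw [hw, hw', hp, if_neg (Bool.eq_false_iff.mp hpos)]
    exact add_sub_add_left_eq_sub ..
  · rw [hw, he, if_pos rfl, mul_one]

/-- perfect completeness of the 3SAT ZKP. With a satisfying
assignment `s'`, literal bits `p`, a selector `e` of a true literal in each
clause, and commitments `w i j = a·(p i j) + c i j`, `w' j = a·(s' j) + c' j`: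
(1) negated literals: the sum of commitments unveils to `1`;
(2) non-negated literals: the difference of commitments unveils to `0`;
(3) the selected position of each clause unveils to `1`. -/
theorem threeSAT_completeness
    {F : Type*} [Field F] (n m : ℕ) (hn : 0 < n) (hm : 0 < m)
    (clauses : Fin m → Fin 3 → (Fin n × Bool))
    (s' : Fin n → Bool) (p : Fin m → Fin 3 → Bool)
    (hp : ∀ i j, p i j = if (clauses i j).2 then !(s' (clauses i j).1) else s' (clauses i j).1)
    (e : Fin m → Fin 3) (he : ∀ i, p i (e i) = true)
    (a : F) (c : Fin m → Fin 3 → F) (c' : Fin n → F)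
    (w : Fin m → Fin 3 → F) (w' : Fin n → F)
    (hw : ∀ i j, w i j = a * (if p i j then 1 else 0) + c i j)
    (hw' : ∀ j, w' j = a * (if s' j then 1 else 0) + c' j) :
    (∀ i j, (clauses i j).2 = true →
        w i j + w' (clauses i j).1 = a + (c i j + c' (clauses i j).1)) ∧
    (∀ i j, (clauses i j).2 = false →
        w i j - w' (clauses i j).1 = c i j - c' (clauses i j).1) ∧
    (∀ i, w i (e i) = a + c i (e i)) :=
  threeSAT_completeness_general n m clauses s' p hp e he a c c' w w' hw hw'
end
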